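/- arXiv:1608.07489 — 2 statements merged into one kernel-verified Lean document; each statement's English description precedes it below -/
import Mathlib

section
/- If G is edge-critical, S ⊆ V(G) destabilises G, and v ∈ V(G) \ S, then S ∩ V(G_v) destabilises G_v. -/
open SimpleGraph

/-- The independence number of a graph. -/
noncomputable def indepNum {V : Type} (G : SimpleGraph V) : ℕ :=
  sSup {n : ℕ | ∃ s : Set V, s.Finite ∧ s.ncard = n ∧ ∀ a ∈ s, ∀ b ∈ s, ¬ G.Adj a b}

/-- The number of edges of a graph. -/
noncomputable def numEdges {V : Type} (G : SimpleGraph V) : ℕ := G.edgeSet.ncard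

/-- The degree (valency) of a vertex. -/
noncomputable def deg {V : Type} (G : SimpleGraph V) (v : V) : ℕ := (G.neighborSet v).ncard

/-- The second valency `d²(v) = ∑_{w ∈ N(v)} d(w)`. -/
noncomputable def secondDeg {V : Type} (G : SimpleGraph V) (v : V) : ℕ :=
  ∑ᶠ w ∈ G.neighborSet v, deg G w

/-- `p = (a,b,c,d)` is an (ordered) 4-cycle of `G`. -/
def IsC4 {V : Type} (G : SimpleGraph V) (p : V × V × V × V) : Prop :=
  G.Adj p.1 p.2.1 ∧ G.Adj p.2.1 p.2.2.1 ∧ G.Adj p.2.2.1 p.2.2.2 ∧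
    G.Adj p.2.2.2 p.1 ∧ p.1 ≠ p.2.2.1 ∧ p.2.1 ≠ p.2.2.2

/-- The number of 4-cycles of `G`; each 4-cycle yields 8 ordered tuples. -/
noncomputable def numC4 {V : Type} (G : SimpleGraph V) : ℕ :=
  {p : V × V × V × V | IsC4 G p}.ncard / 8

/-- The number of 4-cycles of `G` containing a vertex of `S`. -/
noncomputable def numC4Through {V : Type} (G : SimpleGraph V) (S : Set V) : ℕ :=
  {p : V × V × V × V | IsC4 G p ∧ (p.1 ∈ S ∨ p.2.1 ∈ S ∨ p.2.2.1 ∈ S ∨ p.2.2.2 ∈ S)}.ncard / 8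

/-- The invariant `ν(G) = 3e(G) − 17n(G) + 35α(G) + N(C₄;G)`. -/
noncomputable def nu {V : Type} (G : SimpleGraph V) : ℤ :=
  3 * (numEdges G : ℤ) - 17 * (Nat.card V : ℤ) + 35 * (_root_.indepNum G : ℤ) + (numC4 G : ℤ)

/-- The closed neighbourhood `N[v]`. -/
def closedNbhd {V : Type} (G : SimpleGraph V) (v : V) : Set V := insert v (G.neighborSet v)

/-- `S` destabilises `G` : removing `S` decreases the independence number. -/
def Destab {V : Type} (G : SimpleGraph V) (S : Set V) : Prop :=
  _root_.indepNum (G.induce Sᶜ) < _root_.indepNum G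

/-- `G` is edge-critical (α-critical): removing any edge increases the independence number. -/
def EdgeCritical {V : Type} (G : SimpleGraph V) : Prop :=
  ∀ e ∈ G.edgeSet, _root_.indepNum G < _root_.indepNum (G.deleteEdges {e})

/-! An edge-critical graph has a maximum independent set through every vertex `v`: if `v` has a
neighbour `u`, a maximum independent set of `G - uv` must contain both ends of `uv`, and dropping
`u` from it leaves one for `G`. Such a set, minus `v`, lies in `G_v`, so `α(G_v) ≥ α(G) - 1`.
Conversely, `v ∉ S` is anticomplete to `V(G_v)`, so adding it to an independent set of
`G_v - S` gives `α(G - S) ≥ α(G_v - S) + 1`. Together with `α(G - S) < α(G)` this gives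
`α(G_v - S) < α(G_v)`. -/

namespace SimpleGraph

variable {V W : Type} {G : SimpleGraph V}

lemma isIndepSet_iff_forall_not_adj {s : Set V} :
    G.IsIndepSet s ↔ ∀ a ∈ s, ∀ b ∈ s, ¬ G.Adj a b :=
  ⟨fun hs _ ha _ hb hab => hs ha hb hab.ne hab, fun hs a ha b hb _ => hs a ha b hb⟩

lemma isIndepSet_sdiff_singleton_of_deleteEdges {s : Set V} {u v : V}
    (hs : (G.deleteEdges {s(u, v)}).IsIndepSet s) : G.IsIndepSet (s \ {u}) := by
  rintro _ ⟨ha, hau⟩ _ ⟨hb, hbu⟩ hne hab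
  refine hs ha hb hne (deleteEdges_adj.2 ⟨hab, fun he => ?_⟩)
  rcases Sym2.eq_iff.1 he with ⟨rfl, -⟩ | ⟨-, rfl⟩
  exacts [hau rfl, hbu rfl]

variable [Finite V]

variable (G) in
lemma bddAbove_ncard_indep :
    BddAbove {n : ℕ | ∃ s : Set V, s.Finite ∧ s.ncard = n ∧
      ∀ a ∈ s, ∀ b ∈ s, ¬ G.Adj a b} := by
  refine ⟨Nat.card V, ?_⟩
  rintro n ⟨t, -, rfl, -⟩
  exact Set.ncard_le_card t

lemma IsIndepSet.ncard_le_indepNum {s : Set V} (hs : G.IsIndepSet s) :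
    s.ncard ≤ _root_.indepNum G :=
  le_csSup (bddAbove_ncard_indep G)
    ⟨s, s.toFinite, rfl, isIndepSet_iff_forall_not_adj.1 hs⟩

variable (G) in
lemma exists_isIndepSet_ncard_eq_indepNum :
    ∃ s : Set V, G.IsIndepSet s ∧ s.ncard = _root_.indepNum G := by
  obtain ⟨s, -, hcard, hs⟩ :=
    Nat.sSup_mem (by exact ⟨0, ∅, by simp⟩) (bddAbove_ncard_indep G)
  exact ⟨s, isIndepSet_iff_forall_not_adj.2 hs, hcard⟩

lemma indepNum_add_one_le_of_embedding [Finite W] {H : SimpleGraph W} (f : H ↪g G) (x : V)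
    (hx : ∀ a, f a ≠ x ∧ ¬ G.Adj x (f a)) :
    _root_.indepNum H + 1 ≤ _root_.indepNum G := by
  obtain ⟨A, hA, hAcard⟩ := exists_isIndepSet_ncard_eq_indepNum H
  have hfA : G.IsIndepSet (f '' A) :=
    (f.injective.injOn.pairwise_image).2 fun a ha b hb hne hab =>
      hA ha hb hne (f.map_rel_iff.1 hab)
  have hxA : G.IsIndepSet (insert x (f '' A)) := by
    refine Set.pairwise_insert.2 ⟨hfA, ?_⟩
    rintro _ ⟨a, -, rfl⟩ -
    exact ⟨(hx a).2, fun h => (hx a).2 h.symm⟩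
  have hx_notMem : x ∉ f '' A := by
    rintro ⟨a, -, ha⟩
    exact (hx a).1 ha
  calc _root_.indepNum H + 1 = (insert x (f '' A)).ncard := by
        rw [Set.ncard_insert_of_notMem hx_notMem, Set.ncard_image_of_injective _ f.injective,
          hAcard]
    _ ≤ _root_.indepNum G := hxA.ncard_le_indepNum

lemma IsIndepSet.ncard_le_indepNum_induce_add {s : Set V} (hs : G.IsIndepSet s) (U : Set V) :
    s.ncard ≤ _root_.indepNum (G.induce U) + (s \ U).ncard := by
  set t : Set U := Subtype.val ⁻¹' s
  have ht : (G.induce U).IsIndepSet t := fun a ha b hb hne =>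
    hs ha hb (Subtype.val_injective.ne hne)
  have hsub : s ⊆ Subtype.val '' t ∪ s \ U := by
    intro x hx
    by_cases hxU : x ∈ U
    exacts [Or.inl ⟨⟨x, hxU⟩, hx, rfl⟩, Or.inr ⟨hx, hxU⟩]
  calc s.ncard ≤ (Subtype.val '' t ∪ s \ U).ncard := Set.ncard_le_ncard hsub
    _ ≤ (Subtype.val '' t).ncard + (s \ U).ncard := Set.ncard_union_le _ _
    _ = t.ncard + (s \ U).ncard := by rw [Set.ncard_image_of_injective _ Subtype.val_injective]
    _ ≤ _root_.indepNum (G.induce U) + (s \ U).ncard := by grw [ht.ncard_le_indepNum]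

lemma IsIndepSet.ncard_le_indepNum_induce_compl_closedNbhd_add_one {s : Set V} {v : V}
    (hs : G.IsIndepSet s) (hvs : v ∈ s) :
    s.ncard ≤ _root_.indepNum (G.induce (closedNbhd G v)ᶜ) + 1 := by
  have hsv : s \ (closedNbhd G v)ᶜ ⊆ {v} := by
    rintro x ⟨hx, hxN⟩
    rcases not_not.1 hxN with rfl | hvx
    exacts [rfl, (hs hvs hx hvx.ne hvx).elim]
  calc s.ncard
      ≤ _root_.indepNum (G.induce (closedNbhd G v)ᶜ) + (s \ (closedNbhd G v)ᶜ).ncard :=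
        hs.ncard_le_indepNum_induce_add _
    _ ≤ _root_.indepNum (G.induce (closedNbhd G v)ᶜ) + 1 := by
      grw [Set.ncard_le_ncard hsv, Set.ncard_singleton]

end SimpleGraph

open SimpleGraph

variable {V : Type} [Finite V] {G : SimpleGraph V}

lemma EdgeCritical.exists_isIndepSet_mem_of_adj (hec : EdgeCritical G) {u v : V}
    (huv : G.Adj u v) :
    ∃ s : Set V, G.IsIndepSet s ∧ v ∈ s ∧ s.ncard = _root_.indepNum G := by
  obtain ⟨J, hJ, hJcard⟩ := exists_isIndepSet_ncard_eq_indepNum (G.deleteEdges {s(u, v)})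
  have hlt : _root_.indepNum G < J.ncard := hJcard ▸ hec _ huv
  have hvJ : v ∈ J := by
    by_contra hvJ
    rw [Sym2.eq_swap] at hJ
    have hJG := isIndepSet_sdiff_singleton_of_deleteEdges hJ
    rw [Set.sdiff_singleton_eq_self hvJ] at hJG
    exact hlt.not_ge hJG.ncard_le_indepNum
  have huJ := isIndepSet_sdiff_singleton_of_deleteEdges hJ
  refine ⟨J \ {u}, huJ, ⟨hvJ, huv.ne.symm⟩, le_antisymm huJ.ncard_le_indepNum ?_⟩
  have hJcard_le := Set.ncard_le_ncard_sdiff_add_ncard J {u}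
  rw [Set.ncard_singleton] at hJcard_le
  omega

lemma EdgeCritical.exists_isIndepSet_mem (hec : EdgeCritical G) (v : V) :
    ∃ s : Set V, G.IsIndepSet s ∧ v ∈ s ∧ s.ncard = _root_.indepNum G := by
  by_cases hadj : ∃ u, G.Adj u v
  · obtain ⟨u, huv⟩ := hadj
    exact hec.exists_isIndepSet_mem_of_adj huv
  obtain ⟨I, hI, hIcard⟩ := exists_isIndepSet_ncard_eq_indepNum G
  have hvI : G.IsIndepSet (insert v I) := Set.pairwise_insert.2
    ⟨hI, fun b _ _ => ⟨fun hvb => hadj ⟨b, hvb.symm⟩, fun hbv => hadj ⟨b, hbv⟩⟩⟩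
  refine ⟨insert v I, hvI, Set.mem_insert v I, le_antisymm hvI.ncard_le_indepNum ?_⟩
  exact hIcard ▸ Set.ncard_le_ncard (Set.subset_insert v I)

/-- If `G` is edge-critical, `S` destabilises `G` and `v ∉ S`, then `S ∩ V(G_v)`
destabilises `G_v`. -/
theorem stmt5 {V : Type} [Fintype V] (G : SimpleGraph V) (hec : EdgeCritical G)
    (S : Set V) (hS : Destab G S) (v : V) (hv : v ∉ S) :
    Destab (G.induce (closedNbhd G v)ᶜ) {u | ↑u ∈ S} := by
  obtain ⟨I, hI, hvI, hIcard⟩ := hec.exists_isIndepSet_mem v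
  have hGv := hIcard ▸ hI.ncard_le_indepNum_induce_compl_closedNbhd_add_one hvI
  let f : (G.induce (closedNbhd G v)ᶜ).induce {u | ↑u ∈ S}ᶜ ↪g G.induce Sᶜ :=
    ⟨⟨fun a => ⟨a.1.1, a.2⟩, fun _ _ h => Subtype.ext <| Subtype.ext congr($h.1)⟩,
      Iff.rfl⟩
  have hGvS := indepNum_add_one_le_of_embedding f ⟨v, hv⟩ fun a =>
    ⟨fun h => a.1.2 (congr($h.1) ▸ Set.mem_insert v _), fun h => a.1.2 (Or.inr h)⟩
  unfold Destab at hS ⊢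
  omega
end

section
/- For every triangle-free graph G and every vertex v, ν(G_v) ≤ ν(G) − 3·d²(v) + 17·d(v) − 18 − N(C_4; G, N(v)), where ν(H) = 3e(H) − 17n(H) + 35α(H) + N(C_4; H). -/
open SimpleGraph

/-!
Passing from `G` to `G_v = G - N[v]` removes `d(v) + 1` vertices and every 4-cycle through
`N(v)`, and it removes at least `d²(v)` edges: in a triangle-free graph no edge joins two
neighbours of `v`, so the edges at the different neighbours of `v` are distinct. The independence
number drops by at least one, since `v` extends every independent set of `G_v`. All four counts
enter `ν` linearly, and `17 (d(v) + 1) - 35 = 17 d(v) - 18`.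
-/

lemma Set.ncard_add_ncard_le_of_injOn {α β : Type} [Finite β] {A : Set α} {B C : Set β}
    {f : α → β} (hf : Set.InjOn f A) (hAC : Set.MapsTo f A C) (hBC : B ⊆ C)
    (hdisj : Disjoint (f '' A) B) : A.ncard + B.ncard ≤ C.ncard := by
  rw [← hf.ncard_image, ← Set.ncard_union_eq hdisj]
  exact Set.ncard_le_ncard (Set.union_subset (Set.image_subset_iff.2 hAC) hBC)

lemma neighborSet_subset_closedNbhd {V : Type} (G : SimpleGraph V) (v : V) :
    G.neighborSet v ⊆ closedNbhd G v :=
  Set.subset_insert _ _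

section IndepNum

variable {V : Type} [Finite V] (G : SimpleGraph V)

lemma bddAbove_indepSetCards :
    BddAbove {n : ℕ | ∃ s : Set V, s.Finite ∧ s.ncard = n ∧ ∀ a ∈ s, ∀ b ∈ s, ¬ G.Adj a b} :=
  ⟨Nat.card V, by rintro n ⟨s, -, rfl, -⟩; exact Set.ncard_le_card s⟩

lemma exists_indepSet_ncard_eq_indepNum :
    ∃ s : Set V, s.ncard = _root_.indepNum G ∧ ∀ a ∈ s, ∀ b ∈ s, ¬ G.Adj a b := by
  obtain ⟨s, -, hs⟩ := Nat.sSup_mem (by exact ⟨0, ∅, Set.finite_empty, by simp, by simp⟩)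
    (bddAbove_indepSetCards G)
  exact ⟨s, hs⟩

lemma ncard_le_indepNum {s : Set V} (hs : ∀ a ∈ s, ∀ b ∈ s, ¬ G.Adj a b) :
    s.ncard ≤ _root_.indepNum G :=
  le_csSup (bddAbove_indepSetCards G) ⟨s, s.toFinite, rfl, hs⟩

lemma indepNum_induce_compl_closedNbhd_add_one_le (v : V) :
    _root_.indepNum (G.induce (closedNbhd G v)ᶜ) + 1 ≤ _root_.indepNum G := by
  obtain ⟨s, hcard, hind⟩ := exists_indepSet_ncard_eq_indepNum (G.induce (closedNbhd G v)ᶜ)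
  have hv : ∀ x : ↥(closedNbhd G v)ᶜ, v ≠ x ∧ ¬ G.Adj v x := fun x =>
    ⟨fun h => x.2 (h ▸ Set.mem_insert _ _), fun h => x.2 (neighborSet_subset_closedNbhd G v h)⟩
  have hvs : v ∉ Subtype.val '' s := by
    rintro ⟨x, -, hx⟩
    exact (hv x).1 hx.symm
  calc _root_.indepNum (G.induce (closedNbhd G v)ᶜ) + 1
      = (insert v (Subtype.val '' s)).ncard := by
        rw [Set.ncard_insert_of_notMem hvs, Set.ncard_image_of_injective _ Subtype.val_injective,
          hcard]
    _ ≤ _root_.indepNum G := by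
        refine ncard_le_indepNum G ?_
        rintro _ (rfl | ⟨x, hx, rfl⟩) _ (rfl | ⟨y, hy, rfl⟩) hab
        · exact G.irrefl hab
        · exact (hv y).2 hab
        · exact (hv x).2 hab.symm
        · exact hind x hx y hy hab

end IndepNum

lemma card_compl_closedNbhd_add {V : Type} [Finite V] (G : SimpleGraph V) (v : V) :
    Nat.card ↥(closedNbhd G v)ᶜ + (deg G v + 1) = Nat.card V := by
  rw [Nat.card_coe_set_eq, deg, ← Set.ncard_insert_of_notMem G.notMem_neighborSet_self, add_comm]
  exact Set.ncard_add_ncard_compl _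

section Edges

variable {V : Type} [Fintype V] (G : SimpleGraph V) [DecidableRel G.Adj]

lemma deg_eq_degree (v : V) : deg G v = G.degree v := by
  rw [deg, Set.ncard_eq_toFinset_card', ← card_neighborSet_eq_degree, Set.toFinset_card]

lemma secondDeg_eq_sum_degree (v : V) :
    secondDeg G v = ∑ w ∈ G.neighborFinset v, G.degree w := by
  have h := finsum_mem_coe_finset (deg G) (G.neighborFinset v)
  rw [coe_neighborFinset] at h
  rw [secondDeg, h]
  exact Finset.sum_congr rfl fun w _ => deg_eq_degree G w

lemma card_biUnion_incidenceFinset_neighborFinset [DecidableEq V] (h3 : G.CliqueFree 3) (v : V) :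
    ((G.neighborFinset v).biUnion fun w => G.incidenceFinset w).card = secondDeg G v := by
  rw [secondDeg_eq_sum_degree, Finset.card_biUnion]
  · exact Finset.sum_congr rfl fun w _ => card_incidenceFinset_eq_degree G w
  intro a ha b hb hab
  have hnadj : ¬ G.Adj a b := fun h => h3 {v, a, b} (is3Clique_triple_iff.2
    ⟨(mem_neighborFinset G v a).1 ha, (mem_neighborFinset G v b).1 hb, h⟩)
  rw [Function.onFun, ← Finset.disjoint_coe, coe_incidenceFinset, coe_incidenceFinset,
    Set.disjoint_iff_inter_eq_empty]
  exact G.incidenceSet_inter_incidenceSet_of_not_adj hnadj hab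

end Edges

lemma numEdges_add_ncard_le {V W : Type} [Finite V] {G : SimpleGraph V} {H : SimpleGraph W}
    (f : H ↪g G) {B : Set (Sym2 V)} (hB : B ⊆ G.edgeSet)
    (hdisj : ∀ e ∈ B, ∃ x ∈ e, x ∉ Set.range f) : numEdges H + B.ncard ≤ numEdges G := by
  refine Set.ncard_add_ncard_le_of_injOn (Sym2.map.injective f.injective).injOn
    (fun e he => f.map_mem_edgeSet_iff.2 he) hB ?_
  rw [Set.disjoint_left]
  rintro _ ⟨e, -, rfl⟩ he
  obtain ⟨x, hx, hxf⟩ := hdisj _ he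
  obtain ⟨y, -, rfl⟩ := Sym2.mem_map.1 hx
  exact hxf ⟨y, rfl⟩

lemma numEdges_induce_compl_closedNbhd_add_secondDeg_le {V : Type} [Fintype V]
    {G : SimpleGraph V} (h3 : G.CliqueFree 3) (v : V) :
    numEdges (G.induce (closedNbhd G v)ᶜ) + secondDeg G v ≤ numEdges G := by
  classical
  rw [← card_biUnion_incidenceFinset_neighborFinset G h3 v, ← Set.ncard_coe_finset]
  refine numEdges_add_ncard_le (Embedding.induce (closedNbhd G v)ᶜ) ?_ ?_
  · intro e he
    obtain ⟨w, -, hw⟩ := Finset.mem_biUnion.1 he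
    exact ((G.mem_incidenceFinset w e).1 hw).1
  · intro e he
    obtain ⟨w, hw, hwe⟩ := Finset.mem_biUnion.1 he
    refine ⟨w, ((G.mem_incidenceFinset w e).1 hwe).2, ?_⟩
    rintro ⟨y, rfl⟩
    exact y.2 (neighborSet_subset_closedNbhd G v ((G.mem_neighborFinset v _).1 hw))

lemma IsC4.map {V W : Type} {G : SimpleGraph V} {H : SimpleGraph W} (f : H ↪g G)
    {p : W × W × W × W} (hp : IsC4 H p) :
    IsC4 G (Prod.map f (Prod.map f (Prod.map f f)) p) := by
  obtain ⟨h1, h2, h3, h4, h5, h6⟩ := hp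
  exact ⟨f.map_adj_iff.2 h1, f.map_adj_iff.2 h2, f.map_adj_iff.2 h3, f.map_adj_iff.2 h4,
    f.injective.ne h5, f.injective.ne h6⟩

lemma numC4_add_numC4Through_le {V W : Type} [Finite V] {G : SimpleGraph V}
    {H : SimpleGraph W} (f : H ↪g G) {S : Set V} (hS : Disjoint (Set.range f) S) :
    numC4 H + numC4Through G S ≤ numC4 G := by
  have hf := f.injective
  refine Nat.div_add_div_le_add_div.trans (Nat.div_le_div_right ?_)
  refine Set.ncard_add_ncard_le_of_injOn (hf.prodMap (hf.prodMap (hf.prodMap hf))).injOn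
    (fun p hp => IsC4.map f hp) (fun p hp => hp.1) ?_
  rw [Set.disjoint_left]
  rintro _ ⟨⟨a, b, c, d⟩, -, rfl⟩ ⟨-, h⟩
  have := Set.disjoint_left.1 hS
  rcases h with h | h | h | h <;> exact this ⟨_, rfl⟩ h

/-- For a triangle-free graph `G` and any vertex `v`,
`ν(G_v) ≤ ν(G) − 3d²(v) + 17d(v) − 18 − N(C₄; G, N(v))`. -/
theorem stmt10 {V : Type} [Fintype V] (G : SimpleGraph V) (h3 : G.CliqueFree 3) (v : V) :
    nu (G.induce (closedNbhd G v)ᶜ) ≤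
      nu G - 3 * (secondDeg G v : ℤ) + 17 * (deg G v : ℤ) - 18 -
        (numC4Through G (G.neighborSet v) : ℤ) := by
  have hn := card_compl_closedNbhd_add G v
  have hα := indepNum_induce_compl_closedNbhd_add_one_le G v
  have he := numEdges_induce_compl_closedNbhd_add_secondDeg_le h3 v
  have hdisj : Disjoint (Set.range (Embedding.induce (G := G) (closedNbhd G v)ᶜ))
      (G.neighborSet v) := by
    rw [Set.disjoint_left]
    rintro _ ⟨y, rfl⟩ hy
    exact y.2 (neighborSet_subset_closedNbhd G v hy)
  have hc := numC4_add_numC4Through_le _ hdisj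
  simp only [nu]
  omega
end
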